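/- arXiv:1603.06240 — 5 statements merged into one kernel-verified Lean document; each statement's English description precedes it below -/
import Mathlib

section
/- Let ρₙ, ρ be probability densities on (Ω,A,m) and p > 0, p ≠ 1, with ∫|ρₙ − ρ|ᵖ dm ≤ εₙ → 0. Then for all r with min(1,p) < r < max(1,p), ∫_Ω |ρₙ − ρ|ʳ dm ≤ 2^((p−r)/(p−1)) · εₙ^((r−1)/(p−1)) → 0, and consequently the Tsallis entropy S_{T,r}[ρₙ] = (1−r)⁻¹(1 − ∫ρₙʳ dm) converges to S_{T,r}[ρ]. -/
/-!
With `θ = (p - r) / (p - 1)` one has `r = θ · 1 + (1 - θ) · p`, so Hölder's inequality with the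
exponents `1 / θ` and `1 / (1 - θ)` bounds `∫ |ρₙ - ρ|ʳ` by `(∫ |ρₙ - ρ|)^θ (∫ |ρₙ - ρ|ᵖ)^(1 - θ)`,
and the `L¹` distance of two probability densities is at most `2`.

Convergence in `Lʳ` implies convergence of `∫ |ρₙ|ʳ`: for `r ≤ 1` by the pointwise bound
`|aʳ - bʳ| ≤ |a - b|ʳ`, for `r ≥ 1` by Minkowski's inequality for the `Lʳ` norm.
-/

open MeasureTheory Filter

open scoped Topology

namespace Real

lemma rpow_le_rpow_add_rpow {a s t u : ℝ} (ha : 0 ≤ a) (hs : 0 ≤ s) (ht : 0 ≤ t)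
    (hsu : min s t ≤ u) (hut : u ≤ max s t) : a ^ u ≤ a ^ s + a ^ t := by
  have hchoice : ∀ v, v = s ∨ v = t → a ^ v ≤ a ^ s + a ^ t := by
    rintro v (rfl | rfl)
    · exact le_add_of_nonneg_right (rpow_nonneg ha t)
    · exact le_add_of_nonneg_left (rpow_nonneg ha s)
  rcases le_total a 1 with ha1 | ha1
  · exact (rpow_le_rpow_of_exponent_ge' ha ha1 (le_min hs ht) hsu).trans
      (hchoice _ (min_choice s t))
  · exact (rpow_le_rpow_of_exponent_le ha1 hut).trans (hchoice _ (max_choice s t))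

lemma abs_sub_rpow_le_rpow_add_rpow {a b s : ℝ} (ha : 0 ≤ a) (hb : 0 ≤ b) (hs : 0 ≤ s) :
    |a - b| ^ s ≤ a ^ s + b ^ s := by
  have hmax : |a - b| ≤ max a b := abs_sub_le_iff.2
    ⟨by linarith [le_max_left a b], by linarith [le_max_right a b]⟩
  refine (rpow_le_rpow (abs_nonneg _) hmax hs).trans ?_
  rcases max_choice a b with h | h <;> rw [h]
  · exact le_add_of_nonneg_right (rpow_nonneg hb s)
  · exact le_add_of_nonneg_left (rpow_nonneg ha s)

lemma abs_rpow_sub_rpow_le_abs_sub_rpow {a b s : ℝ} (ha : 0 ≤ a) (hb : 0 ≤ b) (hs0 : 0 ≤ s)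
    (hs1 : s ≤ 1) : |a ^ s - b ^ s| ≤ |a - b| ^ s := by
  have hone_sided : ∀ x y : ℝ, 0 ≤ x → 0 ≤ y → x ^ s - y ^ s ≤ |x - y| ^ s := fun x y hx hy => by
    have : x ^ s ≤ |x - y| ^ s + y ^ s :=
      calc x ^ s ≤ (|x - y| + y) ^ s :=
            rpow_le_rpow hx (by linarith [le_abs_self (x - y)]) hs0
        _ ≤ |x - y| ^ s + y ^ s := rpow_add_le_add_rpow (abs_nonneg _) hy hs0 hs1
    linarith
  exact abs_sub_le_iff.2 ⟨hone_sided a b ha hb, abs_sub_comm a b ▸ hone_sided b a hb ha⟩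

end Real

lemma sub_one_div_sub_one_mem_Ioo {p r : ℝ} (hr1 : min 1 p < r) (hr2 : r < max 1 p) :
    (r - 1) / (p - 1) ∈ Set.Ioo 0 1 := by
  rcases le_total 1 p with hp | hp
  · rw [min_eq_left hp] at hr1
    rw [max_eq_right hp] at hr2
    exact ⟨div_pos (by linarith) (by linarith), (div_lt_one (by linarith)).2 (by linarith)⟩
  · rw [min_eq_right hp] at hr1
    rw [max_eq_left hp] at hr2
    exact ⟨div_pos_of_neg_of_neg (by linarith) (by linarith),
      (div_lt_one_of_neg (by linarith)).2 (by linarith)⟩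

namespace MeasureTheory

variable {Ω : Type*} [MeasurableSpace Ω] {μ : Measure Ω}

lemma memLp_ofReal_iff_integrable_rpow {f : Ω → ℝ} (hf0 : 0 ≤ᵐ[μ] f)
    (hf : AEStronglyMeasurable f μ) {r : ℝ} (hr : 0 < r) :
    MemLp f (.ofReal r) μ ↔ Integrable (fun x => f x ^ r) μ := by
  rw [← integrable_norm_rpow_iff hf (by simpa using hr) ENNReal.ofReal_ne_top,
    ENNReal.toReal_ofReal hr.le]
  refine integrable_congr ?_
  filter_upwards [hf0] with x hx
  rw [Real.norm_of_nonneg hx]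

lemma Integrable.rpow_of_min_le_of_le_max {f : Ω → ℝ} (hf0 : 0 ≤ᵐ[μ] f)
    (hf : AEStronglyMeasurable f μ) {s t u : ℝ} (hs : 0 ≤ s) (ht : 0 ≤ t)
    (hfs : Integrable (fun x => f x ^ s) μ) (hft : Integrable (fun x => f x ^ t) μ)
    (hsu : min s t ≤ u) (hut : u ≤ max s t) : Integrable (fun x => f x ^ u) μ := by
  refine (hfs.add hft).mono' (hf.aemeasurable.pow_const u).aestronglyMeasurable ?_
  filter_upwards [hf0] with x hx
  rw [Real.norm_of_nonneg (Real.rpow_nonneg hx u)]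
  exact Real.rpow_le_rpow_add_rpow hx hs ht hsu hut

lemma integral_rpow_mul_rpow_le {f g : Ω → ℝ} (hf0 : 0 ≤ᵐ[μ] f) (hg0 : 0 ≤ᵐ[μ] g)
    (hf : Integrable f μ) (hg : Integrable g μ) {θ : ℝ} (hθ0 : 0 ≤ θ) (hθ1 : θ ≤ 1) :
    ∫ x, f x ^ θ * g x ^ (1 - θ) ∂μ ≤ (∫ x, f x ∂μ) ^ θ * (∫ x, g x ∂μ) ^ (1 - θ) := by
  have hθ1' : 0 ≤ 1 - θ := sub_nonneg.2 hθ1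
  have hprod : (fun x => ENNReal.ofReal (f x ^ θ * g x ^ (1 - θ))) =ᵐ[μ]
      fun x => ENNReal.ofReal (f x) ^ θ * ENNReal.ofReal (g x) ^ (1 - θ) := by
    filter_upwards [hf0, hg0] with x hfx hgx
    rw [ENNReal.ofReal_mul (Real.rpow_nonneg hfx θ), ENNReal.ofReal_rpow_of_nonneg hfx hθ0,
      ENNReal.ofReal_rpow_of_nonneg hgx hθ1']
  have hholder := ENNReal.lintegral_mul_norm_pow_le hf.aemeasurable.ennreal_ofReal
    hg.aemeasurable.ennreal_ofReal hθ0 hθ1' (add_sub_cancel θ 1)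
  have hmeas : AEStronglyMeasurable (fun x => f x ^ θ * g x ^ (1 - θ)) μ :=
    ((hf.aemeasurable.pow_const θ).mul (hg.aemeasurable.pow_const (1 - θ))).aestronglyMeasurable
  have hprod0 : 0 ≤ᵐ[μ] fun x => f x ^ θ * g x ^ (1 - θ) := by
    filter_upwards [hf0, hg0] with x hfx hgx
    exact mul_nonneg (Real.rpow_nonneg hfx θ) (Real.rpow_nonneg hgx _)
  rw [integral_eq_lintegral_of_nonneg_ae hf0 hf.aestronglyMeasurable,
    integral_eq_lintegral_of_nonneg_ae hg0 hg.aestronglyMeasurable,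
    integral_eq_lintegral_of_nonneg_ae hprod0 hmeas, lintegral_congr_ae hprod,
    ENNReal.toReal_rpow, ENNReal.toReal_rpow, ← ENNReal.toReal_mul]
  exact ENNReal.toReal_mono (ENNReal.mul_ne_top
    (ENNReal.rpow_ne_top_of_nonneg hθ0 hf.lintegral_lt_top.ne)
    (ENNReal.rpow_ne_top_of_nonneg hθ1' hg.lintegral_lt_top.ne)) hholder

lemma integral_rpow_convexComb_le {f : Ω → ℝ} (hf0 : 0 ≤ᵐ[μ] f) {s t θ : ℝ} (hs : 0 < s)
    (ht : 0 < t) (hθ0 : 0 ≤ θ) (hθ1 : θ ≤ 1) (hfs : Integrable (fun x => f x ^ s) μ)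
    (hft : Integrable (fun x => f x ^ t) μ) :
    ∫ x, f x ^ (θ * s + (1 - θ) * t) ∂μ ≤
      (∫ x, f x ^ s ∂μ) ^ θ * (∫ x, f x ^ t ∂μ) ^ (1 - θ) := by
  have hexp : 0 < θ * s + (1 - θ) * t := by
    nlinarith [mul_le_mul_of_nonneg_left (min_le_left s t) hθ0,
      mul_le_mul_of_nonneg_left (min_le_right s t) (sub_nonneg.2 hθ1), lt_min hs ht]
  refine le_of_eq_of_le (integral_congr_ae ?_) (integral_rpow_mul_rpow_le
    (hf0.mono fun x hx => Real.rpow_nonneg hx s) (hf0.mono fun x hx => Real.rpow_nonneg hx t)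
    hfs hft hθ0 hθ1)
  filter_upwards [hf0] with x hx
  rw [← Real.rpow_mul hx, ← Real.rpow_mul hx, ← Real.rpow_add' hx (by linarith), mul_comm s,
    mul_comm t]

lemma integrable_abs_sub_rpow {f g : Ω → ℝ} (hf0 : 0 ≤ᵐ[μ] f) (hg0 : 0 ≤ᵐ[μ] g)
    (hf : AEStronglyMeasurable f μ) (hg : AEStronglyMeasurable g μ) {s : ℝ} (hs : 0 ≤ s)
    (hfs : Integrable (fun x => f x ^ s) μ) (hgs : Integrable (fun x => g x ^ s) μ) :
    Integrable (fun x => |f x - g x| ^ s) μ := by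
  refine (hfs.add hgs).mono' ((hf.sub hg).aemeasurable.abs.pow_const s).aestronglyMeasurable ?_
  filter_upwards [hf0, hg0] with x hfx hgx
  rw [Real.norm_of_nonneg (by positivity)]
  exact Real.abs_sub_rpow_le_rpow_add_rpow hfx hgx hs

lemma integral_abs_sub_le_integral_add {f g : Ω → ℝ} (hf0 : 0 ≤ᵐ[μ] f) (hg0 : 0 ≤ᵐ[μ] g)
    (hf : Integrable f μ) (hg : Integrable g μ) :
    ∫ x, |f x - g x| ∂μ ≤ ∫ x, f x ∂μ + ∫ x, g x ∂μ := by
  rw [← integral_add hf hg]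
  refine integral_mono_ae (hf.sub hg).abs (hf.add hg) ?_
  filter_upwards [hf0, hg0] with x hfx hgx
  exact (abs_sub _ _).trans_eq (by rw [abs_of_nonneg hfx, abs_of_nonneg hgx])

theorem integral_rpow_le_of_integral_le_of_integral_rpow_le {f : Ω → ℝ} (hf0 : 0 ≤ᵐ[μ] f)
    (hf : Integrable f μ) {p : ℝ} (hp : 0 < p) (hfp : Integrable (fun x => f x ^ p) μ)
    {A B : ℝ} (hA : ∫ x, f x ∂μ ≤ A) (hB : ∫ x, f x ^ p ∂μ ≤ B)
    {r : ℝ} (hr1 : min 1 p < r) (hr2 : r < max 1 p) :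
    ∫ x, f x ^ r ∂μ ≤ A ^ ((p - r) / (p - 1)) * B ^ ((r - 1) / (p - 1)) := by
  obtain ⟨hexp0, hexp1⟩ := sub_one_div_sub_one_mem_Ioo hr1 hr2
  have hp1 : p - 1 ≠ 0 := by
    rintro hp1
    rw [show p = 1 by linarith, min_self] at hr1
    rw [show p = 1 by linarith, max_self] at hr2
    exact hr1.not_gt hr2
  have hθ : 1 - (p - r) / (p - 1) = (r - 1) / (p - 1) := by field_simp; ring
  have hr : (p - r) / (p - 1) * 1 + (1 - (p - r) / (p - 1)) * p = r := by field_simp; ring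
  have hinterp := integral_rpow_convexComb_le (θ := (p - r) / (p - 1)) hf0 one_pos hp
    (by linarith) (by linarith) (by simpa using hf) hfp
  rw [hr, hθ] at hinterp
  simp only [Real.rpow_one] at hinterp
  refine hinterp.trans ?_
  have hf1 : 0 ≤ ∫ x, f x ∂μ := integral_nonneg_of_ae hf0
  have hfp0 : 0 ≤ ∫ x, f x ^ p ∂μ :=
    integral_nonneg_of_ae (hf0.mono fun x hx => Real.rpow_nonneg hx p)
  gcongr
  · exact Real.rpow_nonneg (hf1.trans hA) _
  · linarith

theorem tendsto_integral_norm_rpow_of_tendsto_integral_norm_sub_rpow {E : Type*}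
    [NormedAddCommGroup E] {ι : Type*} {l : Filter ι} {f : ι → Ω → E} {g : Ω → E} {r : ℝ}
    (hr : 0 < r) (hf : ∀ i, MemLp (f i) (.ofReal r) μ) (hg : MemLp g (.ofReal r) μ)
    (hfg : Tendsto (fun i => ∫ x, ‖f i x - g x‖ ^ r ∂μ) l (𝓝 0)) :
    Tendsto (fun i => ∫ x, ‖f i x‖ ^ r ∂μ) l (𝓝 (∫ x, ‖g x‖ ^ r ∂μ)) := by
  have hintegrable : ∀ {h : Ω → E}, MemLp h (.ofReal r) μ → Integrable (fun x => ‖h x‖ ^ r) μ :=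
    fun hh => by
      simpa [ENNReal.toReal_ofReal hr.le] using
        hh.integrable_norm_rpow (by simpa using hr) ENNReal.ofReal_ne_top
  rcases le_total r 1 with hr1 | hr1
  · rw [tendsto_iff_norm_sub_tendsto_zero]
    refine squeeze_zero (fun _ => norm_nonneg _) (fun i => ?_) hfg
    rw [← integral_sub (hintegrable (hf i)) (hintegrable hg)]
    refine (norm_integral_le_integral_norm _).trans (integral_mono ((hintegrable (hf i)).sub
      (hintegrable hg)).norm (hintegrable ((hf i).sub hg)) fun x => ?_)
    rw [Real.norm_eq_abs]
    exact (Real.abs_rpow_sub_rpow_le_abs_sub_rpow (norm_nonneg _) (norm_nonneg _) hr.le hr1).trans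
      (Real.rpow_le_rpow (abs_nonneg _) (abs_norm_sub_norm_le _ _) hr.le)
  · have hq : 1 ≤ ENNReal.ofReal r := by simpa using hr1
    have hlpNorm : ∀ h : Ω → E, AEStronglyMeasurable h μ →
        lpNorm h (.ofReal r) μ = (∫ x, ‖h x‖ ^ r ∂μ) ^ r⁻¹ := fun h hh => by
      rw [lpNorm_eq_integral_norm_rpow_toReal (by simpa using hr) ENNReal.ofReal_ne_top hh,
        ENNReal.toReal_ofReal hr.le]
    have hpow : ∀ h : Ω → E, AEStronglyMeasurable h μ →
        ∫ x, ‖h x‖ ^ r ∂μ = lpNorm h (.ofReal r) μ ^ r := fun h hh => by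
      rw [hlpNorm h hh, ← Real.rpow_mul (integral_nonneg fun x => by positivity),
        inv_mul_cancel₀ hr.ne', Real.rpow_one]
    have hsub : Tendsto (fun i => lpNorm (f i - g) (.ofReal r) μ) l (𝓝 0) := by
      have := hfg.rpow_const (Or.inr (inv_nonneg.2 hr.le))
      rw [Real.zero_rpow (inv_ne_zero hr.ne')] at this
      refine this.congr fun i => ?_
      rw [hlpNorm _ ((hf i).sub hg).aestronglyMeasurable]
      rfl
    have hnorm : Tendsto (fun i => lpNorm (f i) (.ofReal r) μ) l (𝓝 (lpNorm g (.ofReal r) μ)) := by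
      rw [tendsto_iff_norm_sub_tendsto_zero]
      refine squeeze_zero (fun _ => norm_nonneg _) (fun i => ?_) hsub
      rw [Real.norm_eq_abs, abs_sub_le_iff]
      constructor
      · linarith [lpNorm_le_lpNorm_add_lpNorm_sub' (f := f i) hg hq]
      · linarith [lpNorm_le_lpNorm_add_lpNorm_sub (f := g) (hf i) hq]
    rw [hpow g hg.aestronglyMeasurable]
    refine (hnorm.rpow_const (Or.inr hr.le)).congr fun i => ?_
    rw [hpow _ (hf i).aestronglyMeasurable]

end MeasureTheory

theorem stmt3_general {Ω : Type*} [MeasurableSpace Ω] (μ : Measure Ω)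
    (ρseq : ℕ → Ω → ℝ) (ρ : Ω → ℝ) (p : ℝ) (ε : ℕ → ℝ)
    (hp : 0 < p)
    (hρn0 : ∀ n x, 0 ≤ ρseq n x) (hρ0 : ∀ x, 0 ≤ ρ x)
    (hρn_int : ∀ n, Integrable (ρseq n) μ) (hρ_int : Integrable ρ μ)
    (hρn_norm : ∀ n, ∫ x, ρseq n x ∂μ = 1) (hρ_norm : ∫ x, ρ x ∂μ = 1)
    (hρnp_int : ∀ n, Integrable (fun x => ρseq n x ^ p) μ)
    (hρp_int : Integrable (fun x => ρ x ^ p) μ)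
    (hε : ∀ n, ∫ x, |ρseq n x - ρ x| ^ p ∂μ ≤ ε n)
    (hε0 : Tendsto ε atTop (nhds 0))
    (r : ℝ) (hr1 : min 1 p < r) (hr2 : r < max 1 p) :
    (∀ n, ∫ x, |ρseq n x - ρ x| ^ r ∂μ ≤
        2 ^ ((p - r) / (p - 1)) * ε n ^ ((r - 1) / (p - 1))) ∧
    Tendsto (fun n => ∫ x, |ρseq n x - ρ x| ^ r ∂μ) atTop (nhds 0) ∧
    Tendsto (fun n => (1 - r)⁻¹ * (1 - ∫ x, ρseq n x ^ r ∂μ)) atTop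
      (nhds ((1 - r)⁻¹ * (1 - ∫ x, ρ x ^ r ∂μ))) := by
  have hr : 0 < r := (lt_min one_pos hp).trans hr1
  have hdist_int : ∀ n, Integrable (fun x => |ρseq n x - ρ x| ^ p) μ := fun n =>
    integrable_abs_sub_rpow (ae_of_all _ (hρn0 n)) (ae_of_all _ hρ0)
      (hρn_int n).aestronglyMeasurable hρ_int.aestronglyMeasurable hp.le (hρnp_int n) hρp_int
  have hbound : ∀ n, ∫ x, |ρseq n x - ρ x| ^ r ∂μ ≤
      2 ^ ((p - r) / (p - 1)) * ε n ^ ((r - 1) / (p - 1)) := fun n =>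
    integral_rpow_le_of_integral_le_of_integral_rpow_le (ae_of_all _ fun x => abs_nonneg _)
      ((hρn_int n).sub hρ_int).abs hp (hdist_int n)
      ((integral_abs_sub_le_integral_add (ae_of_all _ (hρn0 n)) (ae_of_all _ hρ0) (hρn_int n)
        hρ_int).trans_eq (by rw [hρn_norm n, hρ_norm]; norm_num)) (hε n) hr1 hr2
  have hdist : Tendsto (fun n => ∫ x, |ρseq n x - ρ x| ^ r ∂μ) atTop (nhds 0) := by
    have hexp := (sub_one_div_sub_one_mem_Ioo hr1 hr2).1
    have hlim := (hε0.rpow_const (Or.inr hexp.le)).const_mul (2 ^ ((p - r) / (p - 1)))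
    rw [Real.zero_rpow hexp.ne', mul_zero] at hlim
    exact squeeze_zero (fun n => integral_nonneg fun x => by positivity) hbound hlim
  refine ⟨hbound, hdist, ?_⟩
  have hmemLp : ∀ {f : Ω → ℝ}, (∀ x, 0 ≤ f x) → Integrable f μ →
      Integrable (fun x => f x ^ p) μ → MemLp f (.ofReal r) μ := fun hf0 hf hfp =>
    (memLp_ofReal_iff_integrable_rpow (ae_of_all _ hf0) hf.aestronglyMeasurable hr).2
      (Integrable.rpow_of_min_le_of_le_max (ae_of_all _ hf0) hf.aestronglyMeasurable
        zero_le_one hp.le (by simpa using hf) hfp hr1.le hr2.le)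
  have hconv := tendsto_integral_norm_rpow_of_tendsto_integral_norm_sub_rpow hr
    (fun n => hmemLp (hρn0 n) (hρn_int n) (hρnp_int n)) (hmemLp hρ0 hρ_int hρp_int)
    (by simpa only [Real.norm_eq_abs] using hdist)
  simp only [Real.norm_of_nonneg (hρn0 _ _), Real.norm_of_nonneg (hρ0 _)] at hconv
  exact (tendsto_const_nhds.sub hconv).const_mul _

/-- If densities `ρₙ` approximate `ρ` in `Lᵖ`, then for `min 1 p < r < max 1 p`
the `Lʳ` distances converge to `0` with the explicit bound
`2^((p-r)/(p-1)) εₙ^((r-1)/(p-1))`, and the Tsallis entropies of order `r` converge. -/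
theorem stmt3 {Ω : Type*} [MeasurableSpace Ω] (μ : Measure Ω)
    (ρseq : ℕ → Ω → ℝ) (ρ : Ω → ℝ) (p : ℝ) (ε : ℕ → ℝ)
    (hp : 0 < p) (hp1 : p ≠ 1)
    (hρn0 : ∀ n x, 0 ≤ ρseq n x) (hρ0 : ∀ x, 0 ≤ ρ x)
    (hρn_int : ∀ n, Integrable (ρseq n) μ) (hρ_int : Integrable ρ μ)
    (hρn_norm : ∀ n, ∫ x, ρseq n x ∂μ = 1) (hρ_norm : ∫ x, ρ x ∂μ = 1)
    (hρnp_int : ∀ n, Integrable (fun x => ρseq n x ^ p) μ)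
    (hρp_int : Integrable (fun x => ρ x ^ p) μ)
    (hεnn : ∀ n, 0 ≤ ε n)
    (hε : ∀ n, ∫ x, |ρseq n x - ρ x| ^ p ∂μ ≤ ε n)
    (hε0 : Tendsto ε atTop (nhds 0))
    (r : ℝ) (hr1 : min 1 p < r) (hr2 : r < max 1 p) :
    (∀ n, ∫ x, |ρseq n x - ρ x| ^ r ∂μ ≤
        2 ^ ((p - r) / (p - 1)) * ε n ^ ((r - 1) / (p - 1))) ∧
    Tendsto (fun n => ∫ x, |ρseq n x - ρ x| ^ r ∂μ) atTop (nhds 0) ∧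
    Tendsto (fun n => (1 - r)⁻¹ * (1 - ∫ x, ρseq n x ^ r ∂μ)) atTop
      (nhds ((1 - r)⁻¹ * (1 - ∫ x, ρ x ^ r ∂μ))) :=
  stmt3_general μ ρseq ρ p ε hp hρn0 hρ0 hρn_int hρ_int hρn_norm hρ_norm hρnp_int hρp_int hε hε0 r
    hr1 hr2
end

section
/- With ρₙ as in the continuous counterexample (ρₙ(x) = Mₙ/(x(log(1/x))^α) on [1/n, 1/2], zero elsewhere, 1 < α < 2), the Shannon entropy S[ρₙ] = −∫ ρₙ log ρₙ dx satisfies S[ρₙ] = −Θ((log n)^{2−α}) → −∞ as n → ∞, even though ρₙ converges in L¹ to a density ρ and sup_n ∫(ρₙ)ᵖ dx < ∞ for every 0 < p ≤ 1. -/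
open MeasureTheory Filter Set

noncomputable section

/-- The normalizing constant `Mₙ`. -/
def Mn (α : ℝ) (n : ℕ) : ℝ :=
  ((α - 1)⁻¹ * (Real.log 2 ^ (1 - α) - Real.log n ^ (1 - α)))⁻¹

/-- The limiting normalizing constant `M`. -/
def Mlim (α : ℝ) : ℝ := ((α - 1)⁻¹ * Real.log 2 ^ (1 - α))⁻¹

/-- The density `ρₙ` on `(0, 1/2]`, vanishing on `(0, 1/n)`. -/
def ρn (α : ℝ) (n : ℕ) (x : ℝ) : ℝ :=
  if 1 / (n : ℝ) ≤ x then Mn α n / (x * Real.log (1 / x) ^ α) else 0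

/-- The limiting density `ρ` on `(0, 1/2]`. -/
def ρlim (α : ℝ) (x : ℝ) : ℝ := Mlim α / (x * Real.log (1 / x) ^ α)

/-- The Shannon entropy of `ρₙ`. -/
def Sent (α : ℝ) (n : ℕ) : ℝ :=
  -∫ x in Ioc (0 : ℝ) (1 / 2), ρn α n x * Real.log (ρn α n x)

/-!
Substituting `t = log (1 / x)` turns `∫_{1/n}^{1/2} g (log (1 / x)) dx / x` into
`∫_{log 2}^{log n} g t dt`. On `[1/n, 1/2]` we have `log ρₙ = log Mₙ + t - α log t`, so
`-S[ρₙ] = ∫_{log 2}^{log n} Mₙ t^{-α} (log Mₙ + t - α log t) dt`. The middle term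
`Mₙ ∫ t^{1-α} dt ~ M (log n)^{2-α} / (2 - α)` dominates, while the other two converge because
`t^{-α}` and `t^{-α} log t` are integrable at infinity for `α > 1`.

Since `Mₙ ≥ M`, `min ρₙ ρ = (M / Mₙ) ρₙ`, hence `‖ρₙ - ρ‖₁ = 2 - 2 M / Mₙ → 0`; and
`∫ ρₙ^p ≤ ∫ (1 + ρₙ) = 3 / 2`.
-/

open Real Topology Interval

lemma log_one_div_pos {x : ℝ} (hx0 : 0 < x) (hx1 : x < 1) : 0 < log (1 / x) :=
  log_pos (one_lt_one_div hx0 hx1)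

lemma log_one_div_eq_neg_log : (fun y : ℝ => log (1 / y)) = fun y => -log y := by
  ext y
  rw [one_div, log_inv]

theorem integral_comp_log_one_div_div {g : ℝ → ℝ} {a b : ℝ} (ha : 0 < a) (hb : 0 < b)
    (hg : ContinuousOn g [[log (1 / b), log (1 / a)]]) :
    ∫ x in a..b, g (log (1 / x)) / x = ∫ t in log (1 / b)..log (1 / a), g t := by
  have hpos : [[a, b]] ⊆ Ioi 0 := fun x hx => lt_of_lt_of_le (lt_min ha hb) hx.1
  have hsub : ∫ u in log a..log b, g (-u) = ∫ x in a..b, (fun u => g (-u)) (log x) * x⁻¹ := by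
    refine (intervalIntegral.integral_comp_mul_deriv'
      (fun x hx => hasDerivAt_log (hpos hx).ne')
      (continuousOn_inv₀.mono fun x hx => (hpos hx).ne') ?_).symm
    refine (hg.comp continuousOn_neg fun u hu => ?_).mono
      ((strictMonoOn_log.monotoneOn.mono hpos).image_uIcc_subset)
    simp only [one_div, log_inv, mem_uIcc, neg_le_neg_iff] at hu ⊢
    tauto
  simp only [one_div, log_inv] at hsub ⊢
  simp only [div_eq_mul_inv] at hsub ⊢
  rw [← hsub, intervalIntegral.integral_comp_neg]

def rpowMulLogPrimitive (r t : ℝ) : ℝ := t ^ (r + 1) * (log t / (r + 1) - 1 / (r + 1) ^ 2)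

theorem integral_rpow_mul_log {r a b : ℝ} (hr : r ≠ -1) (ha : 0 < a) (hb : 0 < b) :
    ∫ t in a..b, t ^ r * log t = rpowMulLogPrimitive r b - rpowMulLogPrimitive r a := by
  have hpos : [[a, b]] ⊆ Ioi 0 := fun x hx => lt_of_lt_of_le (lt_min ha hb) hx.1
  have hr1 : r + 1 ≠ 0 := by contrapose! hr; linarith
  refine intervalIntegral.integral_eq_sub_of_hasDerivAt (fun t ht => ?_) ?_
  · have ht0 : 0 < t := hpos ht
    have h : HasDerivAt (rpowMulLogPrimitive r) _ t :=
      (hasDerivAt_rpow_const (p := r + 1) (Or.inl ht0.ne')).mul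
        (((hasDerivAt_log ht0.ne').div_const (r + 1)).sub_const (1 / (r + 1) ^ 2))
    refine h.congr_deriv ?_
    rw [add_sub_cancel_right, rpow_add ht0, rpow_one]
    field_simp
    ring
  · refine ContinuousOn.intervalIntegrable fun t ht => ?_
    have ht0 : 0 < t := hpos ht
    exact ((continuousAt_rpow_const _ _ (Or.inl ht0.ne')).mul
      (continuousAt_log ht0.ne')).continuousWithinAt

theorem tendsto_rpowMulLogPrimitive_atTop {r : ℝ} (hr : r < -1) :
    Tendsto (rpowMulLogPrimitive r) atTop (𝓝 0) := by
  have hs : 0 < -(r + 1) := by linarith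
  have h1 : Tendsto (fun t : ℝ => t ^ (r + 1)) atTop (𝓝 0) := by
    simpa using tendsto_rpow_neg_atTop hs
  have h2 : Tendsto (fun t : ℝ => t ^ (r + 1) * log t) atTop (𝓝 0) := by
    refine (isLittleO_log_rpow_atTop hs).tendsto_div_nhds_zero.congr' ?_
    filter_upwards [eventually_gt_atTop 0] with t ht
    rw [rpow_neg ht.le, div_inv_eq_mul, mul_comm]
  have h := (h2.div_const (r + 1)).sub (h1.mul_const (1 / (r + 1) ^ 2))
  rw [zero_div, zero_mul, sub_zero] at h
  refine h.congr fun t => ?_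
  rw [rpowMulLogPrimitive]
  ring

section

variable {α : ℝ}

lemma hasDerivAt_log_one_div_rpow_div (hα : α ≠ 1) {x : ℝ} (hx0 : 0 < x) (hx1 : x < 1) :
    HasDerivAt (fun y => log (1 / y) ^ (1 - α) / (α - 1)) (x * log (1 / x) ^ α)⁻¹ x := by
  have hL := log_one_div_pos hx0 hx1
  have hderiv : HasDerivAt (fun y => log (1 / y)) (-x⁻¹) x := by
    rw [log_one_div_eq_neg_log]
    exact (hasDerivAt_log hx0.ne').neg
  refine ((hderiv.rpow_const (Or.inl hL.ne')).div_const (α - 1)).congr_deriv ?_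
  have hα' : α - 1 ≠ 0 := sub_ne_zero.mpr hα
  rw [show 1 - α - 1 = -α by ring, rpow_neg hL.le]
  field_simp
  ring

/-- At `y = 0` the junk values `log (1 / 0) = 0` and `0 ^ (1 - α) = 0` happen to agree with the
limit as `y → 0⁺`. -/
lemma continuousOn_log_one_div_rpow (hα : 1 < α) {b : ℝ} (hb1 : b < 1) :
    ContinuousOn (fun y => log (1 / y) ^ (1 - α)) (Icc 0 b) := by
  intro x hx
  rcases hx.1.eq_or_lt with rfl | hx0
  · have hlim : Tendsto (fun y : ℝ => log (1 / y) ^ (1 - α)) (𝓝[>] 0) (𝓝 0) := by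
      have hlog : Tendsto (fun y : ℝ => log (1 / y)) (𝓝[>] 0) atTop := by
        simpa only [Function.comp_def, one_div] using tendsto_log_atTop.comp tendsto_inv_nhdsGT_zero
      have h := (tendsto_rpow_neg_atTop (by linarith : 0 < α - 1)).comp hlog
      rwa [neg_sub] at h
    have hcont : ContinuousWithinAt (fun y : ℝ => log (1 / y) ^ (1 - α)) (Ioi 0) 0 := by
      rwa [ContinuousWithinAt, div_zero, log_zero, zero_rpow (by linarith)]
    exact (continuousWithinAt_Ioi_iff_Ici.mp hcont).mono Icc_subset_Ici_self
  · have hL := log_one_div_pos hx0 (hx.2.trans_lt hb1)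
    have hc : ContinuousAt (fun y : ℝ => log (1 / y)) x := by
      rw [log_one_div_eq_neg_log]
      exact (continuousAt_log hx0.ne').neg
    exact (hc.rpow_const (Or.inl hL.ne')).continuousWithinAt

lemma integrableOn_inv_mul_log_one_div_rpow (hα : 1 < α) {b : ℝ} (hb1 : b < 1) :
    IntegrableOn (fun x => (x * log (1 / x) ^ α)⁻¹) (Ioc 0 b) := by
  refine intervalIntegral.integrableOn_deriv_of_nonneg
    ((continuousOn_log_one_div_rpow hα hb1).div_const (α - 1))
    (fun x hx => hasDerivAt_log_one_div_rpow_div hα.ne' hx.1 (hx.2.trans hb1)) fun x hx => ?_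
  have := log_one_div_pos hx.1 (hx.2.trans hb1)
  have := hx.1
  positivity

theorem integral_Ioc_zero_inv_mul_log_one_div_rpow (hα : 1 < α) {b : ℝ} (hb0 : 0 < b)
    (hb1 : b < 1) :
    ∫ x in Ioc 0 b, (x * log (1 / x) ^ α)⁻¹ = log (1 / b) ^ (1 - α) / (α - 1) := by
  rw [← intervalIntegral.integral_of_le hb0.le, intervalIntegral.integral_eq_sub_of_hasDerivAt_of_le
    hb0.le ((continuousOn_log_one_div_rpow hα hb1).div_const (α - 1))
    (fun x hx => hasDerivAt_log_one_div_rpow_div hα.ne' hx.1 (hx.2.trans hb1))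
    ((intervalIntegrable_iff_integrableOn_Ioc_of_le hb0.le).mpr
      (integrableOn_inv_mul_log_one_div_rpow hα hb1))]
  rw [div_zero, log_zero, zero_rpow (by linarith), zero_div, sub_zero]

lemma Mlim_pos (hα : 1 < α) : 0 < Mlim α := by
  have : 0 < (α - 1)⁻¹ := inv_pos.mpr (by linarith)
  exact inv_pos.mpr (mul_pos this (rpow_pos_of_pos (log_pos one_lt_two) _))

lemma ρlim_eq : ρlim α = fun x => Mlim α * (x * log (1 / x) ^ α)⁻¹ := by
  ext x
  exact div_eq_mul_inv _ _

lemma integrableOn_ρlim (hα : 1 < α) : IntegrableOn (ρlim α) (Ioc 0 (1 / 2)) := by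
  rw [ρlim_eq]
  exact (integrableOn_inv_mul_log_one_div_rpow hα (by norm_num)).const_mul _

theorem integral_ρlim (hα : 1 < α) : ∫ x in Ioc (0 : ℝ) (1 / 2), ρlim α x = 1 := by
  rw [ρlim_eq, integral_const_mul, integral_Ioc_zero_inv_mul_log_one_div_rpow hα (by norm_num)
    (by norm_num), Mlim, one_div_one_div, div_eq_inv_mul]
  exact inv_mul_cancel₀ (inv_pos.mp (Mlim_pos hα)).ne'

lemma setIntegral_Ioc_indicator_Ici {f : ℝ → ℝ} {a b c : ℝ} (hac : a < c) (hcb : c ≤ b) :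
    ∫ x in Ioc a b, (Ici c).indicator f x = ∫ x in c..b, f x := by
  rw [setIntegral_indicator measurableSet_Ici, intervalIntegral.integral_of_le hcb,
    ← integral_Icc_eq_integral_Ioc]
  congr 2
  ext x
  simp only [mem_inter_iff, mem_Ioc, mem_Ici, mem_Icc]
  constructor
  · rintro ⟨⟨-, hxb⟩, hcx⟩
    exact ⟨hcx, hxb⟩
  · rintro ⟨hcx, hxb⟩
    exact ⟨⟨hac.trans_le hcx, hxb⟩, hcx⟩

lemma ρn_eq_indicator (n : ℕ) :
    ρn α n = (Ici (1 / (n : ℝ))).indicator fun x => Mn α n / (x * log (1 / x) ^ α) := by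
  ext x
  simp only [ρn, indicator, mem_Ici]

lemma div_mul_log_one_div_rpow (c : ℝ) {x : ℝ} (hx0 : 0 < x) (hx1 : x < 1) :
    c / (x * log (1 / x) ^ α) = c * log (1 / x) ^ (-α) / x := by
  rw [rpow_neg (log_one_div_pos hx0 hx1).le]
  ring

lemma one_div_natCast_mem_Ioo {n : ℕ} (hn : 3 ≤ n) : 1 / (n : ℝ) ∈ Ioo 0 (1 / 2) := by
  have : (3 : ℝ) ≤ n := by exact_mod_cast hn
  constructor
  · positivity
  · exact one_div_lt_one_div_of_lt two_pos (by linarith)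

lemma log_two_lt_log_natCast {n : ℕ} (hn : 3 ≤ n) : log 2 < log n := by
  have : (3 : ℝ) ≤ n := by exact_mod_cast hn
  exact log_lt_log two_pos (by linarith)

lemma mem_Ioo_of_mem_uIcc_one_div_natCast {n : ℕ} (hn : 3 ≤ n) {x : ℝ}
    (hx : x ∈ [[1 / (n : ℝ), 1 / 2]]) : x ∈ Ioo 0 1 := by
  obtain ⟨hn0, hn2⟩ := one_div_natCast_mem_Ioo hn
  rw [uIcc_of_le hn2.le] at hx
  exact ⟨hn0.trans_le hx.1, hx.2.trans_lt (by norm_num)⟩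

lemma pos_of_mem_uIcc_log_two_log {n : ℕ} (hn : 3 ≤ n) {t : ℝ}
    (ht : t ∈ [[log 2, log (n : ℝ)]]) : 0 < t := by
  rw [uIcc_of_le (log_two_lt_log_natCast hn).le] at ht
  exact (log_pos one_lt_two).trans_le ht.1

lemma Mn_pos (hα : 1 < α) {n : ℕ} (hn : 3 ≤ n) : 0 < Mn α n := by
  have hlt := rpow_lt_rpow_of_neg (log_pos one_lt_two) (log_two_lt_log_natCast hn)
    (by linarith : 1 - α < 0)
  have : 0 < (α - 1)⁻¹ := inv_pos.mpr (by linarith)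
  exact inv_pos.mpr (mul_pos this (sub_pos.mpr hlt))

lemma integral_rpow_neg_log_two_log (hα : α ≠ 1) {n : ℕ} (hn : 3 ≤ n) :
    ∫ t in log 2..log n, t ^ (-α) = (Mn α n)⁻¹ := by
  have h0 : (0 : ℝ) ∉ [[log 2, log n]] := fun h => (pos_of_mem_uIcc_log_two_log hn h).false
  rw [integral_rpow (Or.inr ⟨by contrapose! hα; linarith, h0⟩), Mn, inv_inv,
    show -α + 1 = 1 - α by ring]
  have : α - 1 ≠ 0 := sub_ne_zero.mpr hα
  field_simp
  ring

lemma integral_comp_log_one_div_div_natCast {g : ℝ → ℝ} {n : ℕ} (hn : 3 ≤ n)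
    (hg : ∀ t, 0 < t → ContinuousAt g t) :
    ∫ x in (1 / (n : ℝ))..(1 / 2), g (log (1 / x)) / x = ∫ t in log 2..log n, g t := by
  have h := integral_comp_log_one_div_div (g := g) (one_div_natCast_mem_Ioo hn).1 one_half_pos
  simp only [one_div_one_div] at h
  exact h fun t ht => (hg t (pos_of_mem_uIcc_log_two_log hn ht)).continuousWithinAt

theorem integral_ρn (hα : 1 < α) {n : ℕ} (hn : 3 ≤ n) :
    ∫ x in Ioc (0 : ℝ) (1 / 2), ρn α n x = 1 := by
  obtain ⟨hn0, hn2⟩ := one_div_natCast_mem_Ioo hn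
  rw [ρn_eq_indicator, setIntegral_Ioc_indicator_Ici hn0 hn2.le,
    intervalIntegral.integral_congr fun x hx => div_mul_log_one_div_rpow (Mn α n)
      (mem_Ioo_of_mem_uIcc_one_div_natCast hn hx).1 (mem_Ioo_of_mem_uIcc_one_div_natCast hn hx).2,
    integral_comp_log_one_div_div_natCast (g := fun t => Mn α n * t ^ (-α)) hn
      fun t ht => by fun_prop (disch := exact Or.inl ht.ne'),
    intervalIntegral.integral_const_mul, integral_rpow_neg_log_two_log hα.ne' hn]
  exact mul_inv_cancel₀ (Mn_pos hα hn).ne'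

lemma div_mul_log_one_div_rpow_mul_log {c x : ℝ} (hc : 0 < c) (hx0 : 0 < x) (hx1 : x < 1) :
    c / (x * log (1 / x) ^ α) * log (c / (x * log (1 / x) ^ α))
      = c * log (1 / x) ^ (-α) * (log c + log (1 / x) - α * log (log (1 / x))) / x := by
  have hL := log_one_div_pos hx0 hx1
  have hlogx : log x = -log (1 / x) := by rw [one_div, log_inv, neg_neg]
  rw [log_div hc.ne' (by positivity), log_mul hx0.ne' (by positivity), log_rpow hL, hlogx,
    div_mul_log_one_div_rpow c hx0 hx1]
  ring

theorem neg_Sent_eq_integral (hα : 1 < α) {n : ℕ} (hn : 3 ≤ n) :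
    -Sent α n = ∫ t in log 2..log n, Mn α n * t ^ (-α) * (log (Mn α n) + t - α * log t) := by
  obtain ⟨hn0, hn2⟩ := one_div_natCast_mem_Ioo hn
  have hM := Mn_pos hα hn
  have hind : (fun x => ρn α n x * log (ρn α n x)) = (Ici (1 / (n : ℝ))).indicator
      fun x => Mn α n / (x * log (1 / x) ^ α) * log (Mn α n / (x * log (1 / x) ^ α)) := by
    ext x
    rw [ρn_eq_indicator]
    by_cases hx : x ∈ Ici (1 / (n : ℝ))
    · rw [indicator_of_mem hx, indicator_of_mem hx]
    · rw [indicator_of_notMem hx, indicator_of_notMem hx, zero_mul]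
  rw [Sent, neg_neg, hind, setIntegral_Ioc_indicator_Ici hn0 hn2.le,
    intervalIntegral.integral_congr fun x hx =>
      div_mul_log_one_div_rpow_mul_log hM (mem_Ioo_of_mem_uIcc_one_div_natCast hn hx).1
        (mem_Ioo_of_mem_uIcc_one_div_natCast hn hx).2]
  refine integral_comp_log_one_div_div_natCast
    (g := fun t => Mn α n * t ^ (-α) * (log (Mn α n) + t - α * log t)) hn
    fun t ht => by fun_prop (disch := first | exact ht.ne' | exact Or.inl ht.ne')

theorem neg_Sent_eq (hα1 : 1 < α) (hα2 : α < 2) {n : ℕ} (hn : 3 ≤ n) :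
    -Sent α n = log (Mn α n) + Mn α n * (log n ^ (2 - α) - log 2 ^ (2 - α)) / (2 - α)
      - α * Mn α n * (rpowMulLogPrimitive (-α) (log n) - rpowMulLogPrimitive (-α) (log 2)) := by
  have hlog2 : 0 < log 2 := log_pos one_lt_two
  have hlogn : 0 < log n := hlog2.trans (log_two_lt_log_natCast hn)
  have hint : ∀ {f : ℝ → ℝ}, (∀ t, 0 < t → ContinuousAt f t) →
      IntervalIntegrable f volume (log 2) (log n) := fun hf => ContinuousOn.intervalIntegrable
    fun t ht => (hf t (pos_of_mem_uIcc_log_two_log hn ht)).continuousWithinAt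
  have hM := Mn_pos hα1 hn
  rw [neg_Sent_eq_integral hα1 hn, intervalIntegral.integral_congr (g := fun t =>
    Mn α n * log (Mn α n) * t ^ (-α) + Mn α n * t ^ (1 - α) - α * Mn α n * (t ^ (-α) * log t))
    fun t ht => by
      simp only
      rw [show 1 - α = -α + 1 by ring, rpow_add_one (pos_of_mem_uIcc_log_two_log hn ht).ne']
      ring]
  rw [intervalIntegral.integral_sub, intervalIntegral.integral_add,
    intervalIntegral.integral_const_mul, intervalIntegral.integral_const_mul,
    intervalIntegral.integral_const_mul, integral_rpow_neg_log_two_log hα1.ne' hn,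
    integral_rpow (Or.inl (by linarith)), integral_rpow_mul_log (by linarith) hlog2 hlogn,
    show 1 - α + 1 = 2 - α by ring]
  · field_simp
  all_goals exact hint fun t ht => by fun_prop (disch := first | exact ht.ne' | exact Or.inl ht.ne')

lemma tendsto_log_natCast_atTop : Tendsto (fun n : ℕ => log n) atTop atTop :=
  tendsto_log_atTop.comp tendsto_natCast_atTop_atTop

lemma tendsto_log_natCast_rpow_atTop {q : ℝ} (hq : 0 < q) :
    Tendsto (fun n : ℕ => log n ^ q) atTop atTop :=
  (tendsto_rpow_atTop hq).comp tendsto_log_natCast_atTop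

lemma tendsto_Mn (hα : 1 < α) : Tendsto (Mn α) atTop (𝓝 (Mlim α)) := by
  have hpow : Tendsto (fun n : ℕ => log n ^ (1 - α)) atTop (𝓝 0) := by
    have h := (tendsto_rpow_neg_atTop (by linarith : 0 < α - 1)).comp tendsto_log_natCast_atTop
    rwa [neg_sub] at h
  have h := (tendsto_const_nhds (x := log 2 ^ (1 - α))).sub hpow |>.const_mul (α - 1)⁻¹
  rw [sub_zero] at h
  exact h.inv₀ (inv_pos.mp (Mlim_pos hα)).ne'

theorem tendsto_neg_Sent_div (hα1 : 1 < α) (hα2 : α < 2) :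
    Tendsto (fun n : ℕ => -Sent α n / log n ^ (2 - α)) atTop (𝓝 (Mlim α / (2 - α))) := by
  have hM := tendsto_Mn hα1
  have hA := tendsto_log_natCast_rpow_atTop (by linarith : 0 < 2 - α)
  have hP := (tendsto_rpowMulLogPrimitive_atTop (by linarith : -α < -1)).comp
    tendsto_log_natCast_atTop
  have hB : Tendsto (fun n : ℕ => log (Mn α n) - Mn α n * log 2 ^ (2 - α) / (2 - α)
      - α * Mn α n * (rpowMulLogPrimitive (-α) (log n) - rpowMulLogPrimitive (-α) (log 2)))
      atTop (𝓝 (log (Mlim α) - Mlim α * log 2 ^ (2 - α) / (2 - α)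
        - α * Mlim α * (0 - rpowMulLogPrimitive (-α) (log 2)))) :=
    ((hM.log (Mlim_pos hα1).ne').sub ((hM.mul_const _).div_const _)).sub
      ((hM.const_mul α).mul (hP.sub_const _))
  have h := (hM.div_const (2 - α)).add (hB.div_atTop hA)
  rw [add_zero] at h
  refine h.congr' ?_
  filter_upwards [eventually_ge_atTop 3] with n hn
  have hApos : 0 < log n ^ (2 - α) :=
    rpow_pos_of_pos ((log_pos one_lt_two).trans (log_two_lt_log_natCast hn)) _
  have h2α : 2 - α ≠ 0 := by linarith
  rw [neg_Sent_eq hα1 hα2 hn]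
  field_simp
  ring

lemma Mlim_le_Mn (hα : 1 < α) {n : ℕ} (hn : 3 ≤ n) : Mlim α ≤ Mn α n := by
  have hlogn := (log_pos one_lt_two).trans (log_two_lt_log_natCast hn)
  have : 0 < (α - 1)⁻¹ * log n ^ (1 - α) :=
    mul_pos (inv_pos.mpr (by linarith)) (rpow_pos_of_pos hlogn _)
  refine inv_anti₀ (inv_pos.mp (Mn_pos hα hn)) ?_
  linarith [mul_sub (α - 1)⁻¹ (log 2 ^ (1 - α)) (log n ^ (1 - α))]

lemma integrableOn_ρn (hα : 1 < α) (n : ℕ) : IntegrableOn (ρn α n) (Ioc 0 (1 / 2)) := by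
  rw [ρn_eq_indicator]
  simp_rw [div_eq_mul_inv]
  exact ((integrableOn_inv_mul_log_one_div_rpow hα (by norm_num)).const_mul _).indicator
    measurableSet_Ici

lemma abs_ρn_sub_ρlim (hα : 1 < α) {n : ℕ} (hn : 3 ≤ n) {x : ℝ} (hx : x ∈ Ioc (0 : ℝ) (1 / 2)) :
    |ρn α n x - ρlim α x| = ρn α n x + ρlim α x - 2 * (Mlim α / Mn α n) * ρn α n x := by
  have hL := log_one_div_pos hx.1 (hx.2.trans_lt (by norm_num))
  have hw : 0 < x * log (1 / x) ^ α := mul_pos hx.1 (rpow_pos_of_pos hL α)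
  have hM := Mn_pos hα hn
  by_cases hnx : 1 / (n : ℝ) ≤ x
  · rw [ρn, ρlim, if_pos hnx, abs_of_nonneg (by
      rw [div_sub_div_same]; exact div_nonneg (sub_nonneg.mpr (Mlim_le_Mn hα hn)) hw.le)]
    field_simp
    ring
  · rw [ρn, if_neg hnx, zero_sub, abs_neg, ρlim,
      abs_of_nonneg (div_nonneg (Mlim_pos hα).le hw.le)]
    ring

theorem tendsto_integral_abs_ρn_sub_ρlim (hα : 1 < α) :
    Tendsto (fun n : ℕ => ∫ x in Ioc (0 : ℝ) (1 / 2), |ρn α n x - ρlim α x|) atTop (𝓝 0) := by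
  have h : Tendsto (fun n : ℕ => 2 - 2 * (Mlim α / Mn α n)) atTop (𝓝 (2 - 2 * (Mlim α / Mlim α))) :=
    tendsto_const_nhds.sub ((tendsto_const_nhds.div (tendsto_Mn hα) (Mlim_pos hα).ne').const_mul 2)
  rw [div_self (Mlim_pos hα).ne', mul_one, sub_self] at h
  refine h.congr' ?_
  filter_upwards [eventually_ge_atTop 3] with n hn
  have hsum : IntegrableOn (fun x => ρn α n x + ρlim α x) (Ioc 0 (1 / 2)) :=
    (integrableOn_ρn hα n).add (integrableOn_ρlim hα)
  symm
  rw [setIntegral_congr_fun measurableSet_Ioc fun x hx => abs_ρn_sub_ρlim hα hn hx,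
    integral_sub hsum ((integrableOn_ρn hα n).const_mul _),
    integral_add (integrableOn_ρn hα n) (integrableOn_ρlim hα), integral_const_mul,
    integral_ρn hα hn, integral_ρlim hα]
  ring

lemma rpow_le_one_add {x p : ℝ} (hx : 0 ≤ x) (hp0 : 0 ≤ p) (hp1 : p ≤ 1) : x ^ p ≤ 1 + x := by
  rcases le_total x 1 with h | h
  · linarith [rpow_le_one hx h hp0]
  · have := rpow_le_rpow_of_exponent_le h hp1
    rw [rpow_one] at this
    linarith

theorem setIntegral_rpow_le {X : Type*} [MeasurableSpace X] {μ : Measure X} {s : Set X}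
    {f : X → ℝ} (hs : μ s ≠ ⊤) (hf : IntegrableOn f s μ) (hf0 : ∀ᵐ x ∂μ.restrict s, 0 ≤ f x)
    {p : ℝ} (hp0 : 0 ≤ p) (hp1 : p ≤ 1) :
    ∫ x in s, f x ^ p ∂μ ≤ μ.real s + ∫ x in s, f x ∂μ := by
  have hone : IntegrableOn (fun _ => (1 : ℝ)) s μ := integrableOn_const hs
  calc ∫ x in s, f x ^ p ∂μ ≤ ∫ x in s, (1 + f x) ∂μ :=
        integral_mono_of_nonneg (hf0.mono fun x hx => rpow_nonneg hx p) (hone.add hf)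
          (hf0.mono fun x hx => rpow_le_one_add hx hp0 hp1)
    _ = μ.real s + ∫ x in s, f x ∂μ := by
        rw [integral_add hone hf, setIntegral_const, smul_eq_mul, mul_one]

lemma ρn_nonneg (hα : 1 < α) {n : ℕ} (hn : 3 ≤ n) {x : ℝ} (hx0 : 0 < x) (hx1 : x < 1) :
    0 ≤ ρn α n x := by
  have := log_one_div_pos hx0 hx1
  have := Mn_pos hα hn
  rw [ρn]
  split_ifs
  · positivity
  · exact le_rfl

lemma exists_mul_le_and_le_mul_of_tendsto_div {u v : ℕ → ℝ} {K : ℝ} (hK : 0 < K)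
    (hv : ∀ᶠ n in atTop, 0 < v n) (h : Tendsto (fun n => u n / v n) atTop (𝓝 K)) :
    ∃ c C : ℝ, 0 < c ∧ 0 < C ∧ ∃ N : ℕ, ∀ n, N ≤ n → c * v n ≤ u n ∧ u n ≤ C * v n := by
  obtain ⟨N, hN⟩ := eventually_atTop.mp <| hv.and <|
    (h.eventually (Ioo_mem_nhds (half_lt_self hK) (lt_two_mul_self hK)))
  refine ⟨K / 2, 2 * K, by positivity, by positivity, N, fun n hn => ?_⟩
  obtain ⟨hvn, hlo, hhi⟩ := hN n hn
  exact ⟨(le_div_iff₀ hvn).mp hlo.le, (div_le_iff₀ hvn).mp hhi.le⟩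

end

/-- Continuous counterexample: for `1 < α < 2`, the Shannon entropy of `ρₙ` is
`-Θ((log n)^{2-α})`, hence tends to `-∞`, even though `ρₙ → ρ` in `L¹` (with `ρ` a
probability density) and `sup_n ∫ ρₙᵖ < ∞` for every `0 < p ≤ 1`. -/
theorem stmt7 (α : ℝ) (hα1 : 1 < α) (hα2 : α < 2) :
    (∃ c C : ℝ, 0 < c ∧ 0 < C ∧ ∃ N : ℕ, ∀ n, N ≤ n →
        c * Real.log n ^ (2 - α) ≤ -Sent α n ∧ -Sent α n ≤ C * Real.log n ^ (2 - α)) ∧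
    Tendsto (fun n => Sent α n) atTop atBot ∧
    (∫ x in Ioc (0 : ℝ) (1 / 2), ρlim α x) = 1 ∧
    Tendsto (fun n : ℕ => ∫ x in Ioc (0 : ℝ) (1 / 2), |ρn α n x - ρlim α x|)
      atTop (nhds 0) ∧
    (∀ p : ℝ, 0 < p → p ≤ 1 → ∃ Cp : ℝ, ∀ n : ℕ, 3 ≤ n →
        ∫ x in Ioc (0 : ℝ) (1 / 2), ρn α n x ^ p ≤ Cp) := by
  have hratio := tendsto_neg_Sent_div hα1 hα2
  have hK : 0 < Mlim α / (2 - α) := div_pos (Mlim_pos hα1) (by linarith)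
  have hA := tendsto_log_natCast_rpow_atTop (by linarith : 0 < 2 - α)
  refine ⟨exists_mul_le_and_le_mul_of_tendsto_div hK (hA.eventually_gt_atTop 0) hratio,
    tendsto_neg_atTop_iff.mp (hA.num hK hratio), integral_ρlim hα1,
    tendsto_integral_abs_ρn_sub_ρlim hα1, fun p hp hp1 => ⟨1 / 2 + 1, fun n hn => ?_⟩⟩
  have hbound := setIntegral_rpow_le measure_Ioc_lt_top.ne (integrableOn_ρn hα1 n)
    ((ae_restrict_mem measurableSet_Ioc).mono fun x hx =>
      ρn_nonneg hα1 hn hx.1 (hx.2.trans_lt (by norm_num))) hp.le hp1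
  rwa [integral_ρn hα1 hn, Real.volume_real_Ioc_of_le (by norm_num), sub_zero] at hbound

end
end

section
/- Let ρ be a probability density on (Ω,A,m) with ∫ρᵖ dm ≤ A for some 0 < p < 1 and ∫ρ^q dm ≤ A for some q > 1, with A ≥ 1. Then the Shannon entropy S[ρ] = −∫ρ log ρ dm is finite and satisfies |S[ρ]| ≤ 2A / min(q−1, 1−p). -/
open MeasureTheory

/-- Upper bound: `t * log t ≤ (t^q - t)/(q-1)` for `t ≥ 0`, `q > 1`. -/
lemma aux_upper (q : ℝ) (hq : 1 < q) {t : ℝ} (ht : 0 ≤ t) :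
    t * Real.log t ≤ (t ^ q - t) / (q - 1) := by
  rcases eq_or_lt_of_le ht with h | h
  · simp [← h, Real.zero_rpow (by linarith : q ≠ 0)]
  · have hs : (0:ℝ) < t ^ (q - 1) := Real.rpow_pos_of_pos h _
    have h1 : Real.log (t ^ (q - 1)) ≤ t ^ (q - 1) - 1 :=
      Real.log_le_sub_one_of_pos hs
    rw [Real.log_rpow h] at h1
    have h2 : t * ((q - 1) * Real.log t) ≤ t * (t ^ (q - 1) - 1) :=
      mul_le_mul_of_nonneg_left h1 ht
    have h3 : t * t ^ (q - 1) = t ^ q := by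
      rw [mul_comm, ← Real.rpow_add_one h.ne']; ring_nf
    rw [le_div_iff₀ (by linarith : (0:ℝ) < q - 1)]
    nlinarith [h2, h3]

/-- Lower bound: `(t - t^p)/(1-p) ≤ t * log t` for `t ≥ 0`, `0 < p < 1`. -/
lemma aux_lower (p : ℝ) (hp0 : 0 < p) (hp1 : p < 1) {t : ℝ} (ht : 0 ≤ t) :
    (t - t ^ p) / (1 - p) ≤ t * Real.log t := by
  rcases eq_or_lt_of_le ht with h | h
  · simp [← h, Real.zero_rpow (by linarith : p ≠ 0)]
  · have hs : (0:ℝ) < t ^ (p - 1) := Real.rpow_pos_of_pos h _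
    have h1 : Real.log (t ^ (p - 1)) ≤ t ^ (p - 1) - 1 :=
      Real.log_le_sub_one_of_pos hs
    rw [Real.log_rpow h] at h1
    have h2 : t * ((p - 1) * Real.log t) ≤ t * (t ^ (p - 1) - 1) :=
      mul_le_mul_of_nonneg_left h1 ht
    have h3 : t * t ^ (p - 1) = t ^ p := by
      rw [mul_comm, ← Real.rpow_add_one h.ne']; ring_nf
    rw [div_le_iff₀ (by linarith : (0:ℝ) < 1 - p)]
    nlinarith [h2, h3]

/-- Boundedness of the Boltzmann–Shannon entropy under the stabilizing conditions
`∫ρᵖ ≤ A` (some `0 < p < 1`) and `∫ρ^q ≤ A` (some `q > 1`), with `A ≥ 1`: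
the entropy `S[ρ] = -∫ ρ log ρ` is finite and `|S[ρ]| ≤ 2A / min (q-1) (1-p)`. -/
theorem stmt13 {Ω : Type*} [MeasurableSpace Ω] (μ : Measure Ω)
    (ρ : Ω → ℝ) (p q A : ℝ)
    (hρ0 : ∀ x, 0 ≤ ρ x) (hρ_int : Integrable ρ μ) (hρ_norm : ∫ x, ρ x ∂μ = 1)
    (hp0 : 0 < p) (hp1 : p < 1) (hq : 1 < q) (hA : 1 ≤ A)
    (hintp : Integrable (fun x => ρ x ^ p) μ)
    (hintq : Integrable (fun x => ρ x ^ q) μ)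
    (hAp : ∫ x, ρ x ^ p ∂μ ≤ A)
    (hAq : ∫ x, ρ x ^ q ∂μ ≤ A) :
    Integrable (fun x => ρ x * Real.log (ρ x)) μ ∧
    |-∫ x, ρ x * Real.log (ρ x) ∂μ| ≤ 2 * A / min (q - 1) (1 - p) := by
  have hq1 : (0:ℝ) < q - 1 := by linarith
  have hp1' : (0:ℝ) < 1 - p := by linarith
  -- measurability
  have hmeas : AEStronglyMeasurable (fun x => ρ x * Real.log (ρ x)) μ := by
    exact (hρ_int.aestronglyMeasurable.aemeasurable.mul
      (Real.measurable_log.comp_aemeasurable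
        hρ_int.aestronglyMeasurable.aemeasurable)).aestronglyMeasurable
  -- dominating function
  have hdom : Integrable
      (fun x => (ρ x ^ q + ρ x) / (q - 1) + (ρ x ^ p + ρ x) / (1 - p)) μ :=
    ((hintq.add hρ_int).div_const _).add ((hintp.add hρ_int).div_const _)
  have hint : Integrable (fun x => ρ x * Real.log (ρ x)) μ := by
    refine hdom.mono' hmeas (Filter.Eventually.of_forall fun x => ?_)
    have ht := hρ0 x
    have hq' : ρ x ^ q ≥ 0 := Real.rpow_nonneg ht q
    have hp' : ρ x ^ p ≥ 0 := Real.rpow_nonneg ht p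
    have hu := aux_upper q hq ht
    have hl := aux_lower p hp0 hp1 ht
    rw [Real.norm_eq_abs, abs_le]
    constructor
    · have h0 : -((ρ x ^ p + ρ x) / (1 - p)) ≤ (ρ x - ρ x ^ p) / (1 - p) := by
        rw [← neg_div, div_le_div_iff₀ hp1' hp1']
        nlinarith
      have hnn : 0 ≤ (ρ x ^ q + ρ x) / (q - 1) := by positivity
      nlinarith [h0.trans hl]
    · have h2 : (ρ x ^ q - ρ x) / (q - 1) ≤ (ρ x ^ q + ρ x) / (q - 1) := by
        rw [div_le_div_iff₀ hq1 hq1]; nlinarith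
      have hnn : 0 ≤ (ρ x ^ p + ρ x) / (1 - p) := by positivity
      nlinarith [hu.trans h2]
  refine ⟨hint, ?_⟩
  have hm : 0 < min (q - 1) (1 - p) := lt_min hq1 hp1'
  -- upper bound for the integral
  have hup : ∫ x, ρ x * Real.log (ρ x) ∂μ ≤ (A - 1) / (q - 1) := by
    have h1 : ∫ x, ρ x * Real.log (ρ x) ∂μ ≤ ∫ x, (ρ x ^ q - ρ x) / (q - 1) ∂μ :=
      integral_mono hint ((hintq.sub hρ_int).div_const _)
        (fun x => aux_upper q hq (hρ0 x))
    have h2 : ∫ x, (ρ x ^ q - ρ x) / (q - 1) ∂μ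
        = ((∫ x, ρ x ^ q ∂μ) - 1) / (q - 1) := by
      rw [integral_div, integral_sub hintq hρ_int, hρ_norm]
    rw [h2] at h1
    exact h1.trans (by rw [div_le_div_iff₀ hq1 hq1]; nlinarith)
  have hlo : (1 - A) / (1 - p) ≤ ∫ x, ρ x * Real.log (ρ x) ∂μ := by
    have h1 : ∫ x, (ρ x - ρ x ^ p) / (1 - p) ∂μ ≤ ∫ x, ρ x * Real.log (ρ x) ∂μ :=
      integral_mono ((hρ_int.sub hintp).div_const _) hint
        (fun x => aux_lower p hp0 hp1 (hρ0 x))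
    have h2 : ∫ x, (ρ x - ρ x ^ p) / (1 - p) ∂μ
        = (1 - ∫ x, ρ x ^ p ∂μ) / (1 - p) := by
      rw [integral_div, integral_sub hρ_int hintp, hρ_norm]
    rw [h2] at h1
    refine le_trans ?_ h1
    rw [div_le_div_iff₀ hp1' hp1']
    nlinarith
  have hupf : (A - 1) / (q - 1) ≤ 2 * A / min (q - 1) (1 - p) := by
    have h1 : (A - 1) / (q - 1) ≤ (A - 1) / min (q - 1) (1 - p) :=
      div_le_div_of_nonneg_left (by linarith) hm (min_le_left _ _)
    refine h1.trans ?_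
    rw [div_le_div_iff₀ hm hm]
    nlinarith
  have hlof : (A - 1) / (1 - p) ≤ 2 * A / min (q - 1) (1 - p) := by
    have h1 : (A - 1) / (1 - p) ≤ (A - 1) / min (q - 1) (1 - p) :=
      div_le_div_of_nonneg_left (by linarith) hm (min_le_right _ _)
    refine h1.trans ?_
    rw [div_le_div_iff₀ hm hm]
    nlinarith
  rw [abs_neg, abs_le]
  constructor
  · have : -(2 * A / min (q - 1) (1 - p)) ≤ (1 - A) / (1 - p) := by
      rw [neg_le, ← neg_div, neg_sub]
      exact hlof
    exact this.trans hlo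
  · exact hup.trans hupf
end

section
/- Let ρₙ, ρ be probability densities on (Ω,A,m) satisfying ∫|ρₙ − ρ| dm → 0, and suppose for some 0 < p < 1 < q and constant A that ∫ρₙᵖ dm ≤ A, ∫ρᵖ dm ≤ A, ∫ρₙ^q dm ≤ A, ∫ρ^q dm ≤ A for all n. Then the Shannon entropies converge: −∫ρₙ log ρₙ dm → −∫ρ log ρ dm. -/
/-!
The map `t ↦ t log t` is Lipschitz on every interval `[δ, M]` with `0 < δ`, and it is `o(t^p)`
as `t → 0⁺` and `o(t^q)` as `t → ∞`. Comparing it with its composition with the clamp to `[δ, M]`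
gives, for every `ε > 0`, some `L` with
`|x log x - y log y| ≤ L |x - y| + ε (x^p + x^q + y^p + y^q)` for all `x, y ≥ 0`.
Integrating this with `x = ρₙ`, `y = ρ`, the first term tends to `0` by `L¹` convergence and the
second is at most `4εA`, uniformly in `n`.
-/

open MeasureTheory Filter Set Asymptotics Topology

def IsLipschitzUpToWeight (F w : ℝ → ℝ) : Prop :=
  ∀ ε > 0, ∃ L, ∀ x y, 0 ≤ x → 0 ≤ y → |F x - F y| ≤ L * |x - y| + ε * (w x + w y)

/-- The shift by `F δ` makes this error term vanish at `0`, where the weight vanishes. -/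
lemma abs_sub_comp_projIcc_add_le {F : ℝ → ℝ} {p q δ M η t : ℝ} (hp : 0 ≤ p) (hq : 0 ≤ q)
    (hδ : 0 < δ) (hδM : δ ≤ M) (hη : 0 ≤ η) (hF0 : F 0 = 0)
    (hsmall : ∀ s ∈ Ioc 0 δ, |F s| ≤ η * s ^ p) (hlarge : ∀ s, M ≤ s → |F s| ≤ η * s ^ q)
    (ht : 0 ≤ t) :
    |F t - F (projIcc δ M hδM t) + F δ| ≤ 2 * η * (t ^ p + t ^ q) := by
  have hFδ := hsmall δ ⟨hδ, le_rfl⟩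
  have htp : 0 ≤ t ^ p := Real.rpow_nonneg ht p
  have htq : 0 ≤ t ^ q := Real.rpow_nonneg ht q
  rcases le_total t δ with htδ | hδt
  · rw [projIcc_of_le_left _ htδ, sub_add_cancel]
    have hFt : |F t| ≤ η * t ^ p := by
      rcases ht.eq_or_lt with rfl | ht₀
      · simpa [hF0] using mul_nonneg hη htp
      · exact hsmall t ⟨ht₀, htδ⟩
    nlinarith
  rcases le_total t M with htM | hMt
  · rw [projIcc_of_mem _ ⟨hδt, htM⟩, sub_self, zero_add]
    nlinarith [Real.rpow_le_rpow hδ.le hδt hp]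
  · rw [projIcc_of_right_le _ hMt]
    calc |F t - F M + F δ| ≤ |F t| + |F M| + |F δ| := by
          grw [abs_add_le, abs_sub]
      _ ≤ η * t ^ q + η * M ^ q + η * δ ^ p := by
          grw [hlarge t hMt, hlarge M le_rfl, hFδ]
      _ ≤ 2 * η * (t ^ p + t ^ q) := by
          nlinarith [Real.rpow_le_rpow hδ.le (hδM.trans hMt) hp,
            Real.rpow_le_rpow (hδ.le.trans hδM) hMt hq]

theorem isLipschitzUpToWeight_of_isLittleO {F : ℝ → ℝ} {p q : ℝ} (hp : 0 < p) (hq : 0 < q)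
    (hF0 : F 0 = 0) (hF : ContDiffOn ℝ 1 F (Ioi 0))
    (hF_zero : F =o[𝓝[>] 0] (· ^ p)) (hF_top : F =o[atTop] (· ^ q)) :
    IsLipschitzUpToWeight F (fun t => t ^ p + t ^ q) := by
  intro ε hε
  obtain ⟨δ, hδ, hsmall⟩ := mem_nhdsGT_iff_exists_Ioc_subset.1 (hF_zero.def (half_pos hε))
  obtain ⟨M₀, hlarge⟩ := eventually_atTop.1 (hF_top.def (half_pos hε))
  have hδM : δ ≤ max M₀ δ := le_max_right _ _
  obtain ⟨K, hK⟩ := (hF.mono fun s hs => hδ.trans_le hs.1).exists_lipschitzOnWith one_ne_zero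
    (convex_Icc δ (max M₀ δ)) isCompact_Icc
  have htail (t : ℝ) (ht : 0 ≤ t) := abs_sub_comp_projIcc_add_le hp.le hq.le hδ hδM
    (half_pos hε).le hF0
    (fun s hs => by simpa [abs_of_nonneg (Real.rpow_nonneg hs.1.le p)] using hsmall hs)
    (fun s hs => by
      simpa [abs_of_nonneg (Real.rpow_nonneg (hδ.le.trans (hδM.trans hs)) q)] using
        hlarge s ((le_max_left _ _).trans hs)) ht
  refine ⟨K, fun x y hx hy => ?_⟩
  have hmid : |F (projIcc δ _ hδM x) - F (projIcc δ _ hδM y)| ≤ K * |x - y| :=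
    (hK.dist_le_mul _ (Subtype.prop _) _ (Subtype.prop _)).trans
      (mul_le_mul_of_nonneg_left (abs_projIcc_sub_projIcc hδM) K.2)
  have hx' := htail x hx
  have hy' := htail y hy
  -- `F x - F y` is the difference of the two error terms plus `F (clamp x) - F (clamp y)`.
  rw [abs_le] at hx' hy' hmid ⊢
  constructor <;> nlinarith

namespace Real

lemma isLittleO_mul_log_rpow_nhdsGT_zero {p : ℝ} (hp : p < 1) :
    (fun t => t * log t) =o[𝓝[>] 0] (· ^ p) := by
  have h := (isBigO_refl (· ^ p) (𝓝[>] (0 : ℝ))).mul_isLittleO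
    ((isLittleO_one_iff ℝ).2 (tendsto_log_mul_rpow_nhdsGT_zero (sub_pos.2 hp)))
  refine h.congr' ?_ (by simp)
  filter_upwards [self_mem_nhdsWithin] with t (ht : 0 < t)
  rw [mul_left_comm, ← rpow_add ht, add_sub_cancel, rpow_one, mul_comm]

lemma isLittleO_mul_log_rpow_atTop {q : ℝ} (hq : 1 < q) :
    (fun t => t * log t) =o[atTop] (· ^ q) := by
  have h := (isBigO_refl id atTop).mul_isLittleO (isLittleO_log_rpow_atTop (sub_pos.2 hq))
  refine h.congr' (by simp) ?_
  filter_upwards [eventually_gt_atTop 0] with t ht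
  rw [id, mul_comm, ← rpow_add_one ht.ne', sub_add_cancel]

lemma contDiffOn_mul_log : ContDiffOn ℝ 1 (fun t => t * log t) (Ioi 0) :=
  contDiffOn_id.mul (contDiffOn_log.mono fun _ ht => ht.ne')

lemma isLipschitzUpToWeight_mul_log {p q : ℝ} (hp₀ : 0 < p) (hp₁ : p < 1) (hq : 1 < q) :
    IsLipschitzUpToWeight (fun t => t * log t) (fun t => t ^ p + t ^ q) :=
  isLipschitzUpToWeight_of_isLittleO hp₀ (zero_lt_one.trans hq) (by simp) contDiffOn_mul_log
    (isLittleO_mul_log_rpow_nhdsGT_zero hp₁) (isLittleO_mul_log_rpow_atTop hq)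

end Real

section Integral

variable {Ω : Type*} [MeasurableSpace Ω] {μ : Measure Ω} {F w : ℝ → ℝ}

lemma abs_integral_comp_sub_le {L ε : ℝ} {u v : Ω → ℝ}
    (hF : ∀ x y, 0 ≤ x → 0 ≤ y → |F x - F y| ≤ L * |x - y| + ε * (w x + w y))
    (hu₀ : ∀ a, 0 ≤ u a) (hv₀ : ∀ a, 0 ≤ v a) (hu : Integrable u μ) (hv : Integrable v μ)
    (hFu : Integrable (fun a => F (u a)) μ) (hFv : Integrable (fun a => F (v a)) μ)
    (hwu : Integrable (fun a => w (u a)) μ) (hwv : Integrable (fun a => w (v a)) μ) :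
    |∫ a, F (u a) ∂μ - ∫ a, F (v a) ∂μ|
      ≤ L * ∫ a, |u a - v a| ∂μ + ε * (∫ a, w (u a) ∂μ + ∫ a, w (v a) ∂μ) := by
  have hdiff : Integrable (fun a => L * |u a - v a|) μ := ((hu.sub hv).abs).const_mul L
  have hweight : Integrable (fun a => ε * (w (u a) + w (v a))) μ := (hwu.add hwv).const_mul ε
  rw [← integral_sub hFu hFv, ← integral_add hwu hwv, ← integral_const_mul,
    ← integral_const_mul, ← integral_add hdiff hweight]
  exact abs_integral_le_integral_abs.trans
    (integral_mono (hFu.sub hFv).abs (hdiff.add hweight) fun a => hF _ _ (hu₀ a) (hv₀ a))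

theorem tendsto_integral_comp_of_tendsto_integral_abs_sub (hF : IsLipschitzUpToWeight F w)
    {f : ℕ → Ω → ℝ} {g : Ω → ℝ} {A : ℝ} (hf₀ : ∀ n a, 0 ≤ f n a) (hg₀ : ∀ a, 0 ≤ g a)
    (hf : ∀ n, Integrable (f n) μ) (hg : Integrable g μ)
    (hFf : ∀ n, Integrable (fun a => F (f n a)) μ) (hFg : Integrable (fun a => F (g a)) μ)
    (hwf : ∀ n, Integrable (fun a => w (f n a)) μ) (hwg : Integrable (fun a => w (g a)) μ)
    (hAf : ∀ n, ∫ a, w (f n a) ∂μ ≤ A) (hAg : ∫ a, w (g a) ∂μ ≤ A)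
    (hlim : Tendsto (fun n => ∫ a, |f n a - g a| ∂μ) atTop (𝓝 0)) :
    Tendsto (fun n => ∫ a, F (f n a) ∂μ) atTop (𝓝 (∫ a, F (g a) ∂μ)) := by
  rw [Metric.tendsto_atTop]
  intro ε hε
  have hA : 0 < 4 * (|A| + 1) := by positivity
  obtain ⟨L, hL⟩ := hF (ε / (4 * (|A| + 1))) (by positivity)
  have hLlim : Tendsto (fun n => L * ∫ a, |f n a - g a| ∂μ) atTop (𝓝 0) := by
    simpa using hlim.const_mul L
  obtain ⟨N, hN⟩ := eventually_atTop.1 (hLlim.eventually (gt_mem_nhds (half_pos hε)))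
  refine ⟨N, fun n hn => ?_⟩
  have hweights : ε / (4 * (|A| + 1)) * (∫ a, w (f n a) ∂μ + ∫ a, w (g a) ∂μ) < ε / 2 := by
    calc _ ≤ ε / (4 * (|A| + 1)) * (2 * |A|) := by
          gcongr; linarith [hAf n, le_abs_self A]
      _ < ε / 2 := by
          rw [div_mul_eq_mul_div, div_lt_div_iff₀ hA two_pos]; nlinarith [abs_nonneg A]
  calc dist (∫ a, F (f n a) ∂μ) (∫ a, F (g a) ∂μ)
      ≤ L * ∫ a, |f n a - g a| ∂μ
          + ε / (4 * (|A| + 1)) * (∫ a, w (f n a) ∂μ + ∫ a, w (g a) ∂μ) :=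
        abs_integral_comp_sub_le hL (hf₀ n) hg₀ (hf n) hg (hFf n) hFg (hwf n) hwg
    _ < ε := by linarith [hN n hn]

lemma integrable_mul_log_of_integrable_rpow {p q : ℝ} (hp₀ : 0 < p) (hp₁ : p < 1) (hq : 1 < q)
    {f : Ω → ℝ} (hf₀ : ∀ a, 0 ≤ f a) (hf : Integrable f μ)
    (hfp : Integrable (fun a => f a ^ p) μ) (hfq : Integrable (fun a => f a ^ q) μ) :
    Integrable (fun a => f a * Real.log (f a)) μ := by
  obtain ⟨L, hL⟩ := Real.isLipschitzUpToWeight_mul_log hp₀ hp₁ hq 1 one_pos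
  refine ((hf.const_mul L).add (hfp.add hfq)).mono'
    (Real.continuous_mul_log.comp_aestronglyMeasurable hf.aestronglyMeasurable)
    (Eventually.of_forall fun a => ?_)
  simpa [Real.zero_rpow hp₀.ne', Real.zero_rpow (zero_lt_one.trans hq).ne',
    abs_of_nonneg (hf₀ a)] using hL (f a) 0 (hf₀ a) le_rfl

end Integral

theorem stmt15_general {Ω : Type*} [MeasurableSpace Ω] (μ : Measure Ω)
    (ρseq : ℕ → Ω → ℝ) (ρ : Ω → ℝ) (p q A : ℝ)
    (hp0 : 0 < p) (hp1 : p < 1) (hq : 1 < q)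
    (hρn0 : ∀ n x, 0 ≤ ρseq n x) (hρ0 : ∀ x, 0 ≤ ρ x)
    (hρn_int : ∀ n, Integrable (ρseq n) μ) (hρ_int : Integrable ρ μ)
    (hL1 : Tendsto (fun n => ∫ x, |ρseq n x - ρ x| ∂μ) atTop (nhds 0))
    (hintnp : ∀ n, Integrable (fun x => ρseq n x ^ p) μ)
    (hintnq : ∀ n, Integrable (fun x => ρseq n x ^ q) μ)
    (hintp : Integrable (fun x => ρ x ^ p) μ)
    (hintq : Integrable (fun x => ρ x ^ q) μ)
    (hAnp : ∀ n, ∫ x, ρseq n x ^ p ∂μ ≤ A)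
    (hAnq : ∀ n, ∫ x, ρseq n x ^ q ∂μ ≤ A)
    (hAp : ∫ x, ρ x ^ p ∂μ ≤ A)
    (hAq : ∫ x, ρ x ^ q ∂μ ≤ A) :
    Tendsto (fun n => -∫ x, ρseq n x * Real.log (ρseq n x) ∂μ) atTop
      (nhds (-∫ x, ρ x * Real.log (ρ x) ∂μ)) := by
  refine (tendsto_integral_comp_of_tendsto_integral_abs_sub (A := 2 * A)
    (Real.isLipschitzUpToWeight_mul_log hp0 hp1 hq) hρn0 hρ0 hρn_int hρ_int
    (fun n => integrable_mul_log_of_integrable_rpow hp0 hp1 hq (hρn0 n) (hρn_int n)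
      (hintnp n) (hintnq n))
    (integrable_mul_log_of_integrable_rpow hp0 hp1 hq hρ0 hρ_int hintp hintq)
    (fun n => (hintnp n).add (hintnq n)) (hintp.add hintq) (fun n => ?_) ?_ hL1).neg
  · rw [integral_add (hintnp n) (hintnq n)]
    linarith [hAnp n, hAnq n]
  · rw [integral_add hintp hintq]
    linarith

/-- Stability of the Boltzmann–Shannon entropy: if densities `ρₙ → ρ` in `L¹` and the
stabilizing conditions `∫ρₙᵖ, ∫ρᵖ, ∫ρₙ^q, ∫ρ^q ≤ A` hold for some `0 < p < 1 < q`,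
then `-∫ ρₙ log ρₙ → -∫ ρ log ρ`. -/
theorem stmt15 {Ω : Type*} [MeasurableSpace Ω] (μ : Measure Ω)
    (ρseq : ℕ → Ω → ℝ) (ρ : Ω → ℝ) (p q A : ℝ)
    (hp0 : 0 < p) (hp1 : p < 1) (hq : 1 < q)
    (hρn0 : ∀ n x, 0 ≤ ρseq n x) (hρ0 : ∀ x, 0 ≤ ρ x)
    (hρn_int : ∀ n, Integrable (ρseq n) μ) (hρ_int : Integrable ρ μ)
    (hρn_norm : ∀ n, ∫ x, ρseq n x ∂μ = 1) (hρ_norm : ∫ x, ρ x ∂μ = 1)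
    (hL1 : Tendsto (fun n => ∫ x, |ρseq n x - ρ x| ∂μ) atTop (nhds 0))
    (hintnp : ∀ n, Integrable (fun x => ρseq n x ^ p) μ)
    (hintnq : ∀ n, Integrable (fun x => ρseq n x ^ q) μ)
    (hintp : Integrable (fun x => ρ x ^ p) μ)
    (hintq : Integrable (fun x => ρ x ^ q) μ)
    (hAnp : ∀ n, ∫ x, ρseq n x ^ p ∂μ ≤ A)
    (hAnq : ∀ n, ∫ x, ρseq n x ^ q ∂μ ≤ A)
    (hAp : ∫ x, ρ x ^ p ∂μ ≤ A)
    (hAq : ∫ x, ρ x ^ q ∂μ ≤ A) :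
    Tendsto (fun n => -∫ x, ρseq n x * Real.log (ρseq n x) ∂μ) atTop
      (nhds (-∫ x, ρ x * Real.log (ρ x) ∂μ)) :=
  stmt15_general μ ρseq ρ p q A hp0 hp1 hq hρn0 hρ0 hρn_int hρ_int hL1 hintnp hintnq hintp hintq
    hAnp hAnq hAp hAq
end

section
/- Let q ∈ (0,1]ᴺ and define the iterated functional N_q[ρ] = ∫_{Ω₁}(⋯(∫_{Ω_N} ρ(x₁,…,x_N)^{q_N} dm_N)^{q_{N−1}}⋯)^{q₁} dm₁ on a product measure space. Then for nonnegative measurable ρ₁, ρ₂ and 0 ≤ α ≤ 1, N_q satisfies both the subadditivity N_q[ρ₁ + ρ₂] ≤ N_q[ρ₁] + N_q[ρ₂] and the concavity N_q[αρ₁ + (1−α)ρ₂] ≥ α N_q[ρ₁] + (1−α) N_q[ρ₂] on the cone of nonnegative functions. -/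
open MeasureTheory ENNReal

/-- The iterated (anisotropic) functional
`N_q[ρ] = ∫_{Ω₁}(⋯(∫_{Ω_N} ρ^{q_N} dm_N)^{q_{N-1}}⋯)^{q₁} dm₁`,
defined recursively: the outermost integral is over the first factor. -/
noncomputable def NQe : (N : ℕ) → (Ω : Fin N → Type) →
    (inst : ∀ i, MeasurableSpace (Ω i)) →
    (m : ∀ i, @MeasureTheory.Measure (Ω i) (inst i)) → (q : Fin N → ℝ) →
    ((∀ i, Ω i) → ℝ≥0∞) → ℝ≥0∞
  | 0, _, _, _, _, ρ => ρ fun i => i.elim0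
  | _ + 1, Ω, inst, m, q, ρ =>
      @MeasureTheory.lintegral (Ω 0) (inst 0) (m 0) fun x0 =>
        (NQe _ (fun i => Ω i.succ) (fun i => inst i.succ) (fun i => m i.succ)
            (fun i => q i.succ) fun xs => ρ (Fin.cons x0 xs)) ^ q 0

/-! The proof is an induction on the number of factors: peeling off the outermost integral,
`N_q[ρ] = ∫ (N_{q'}[ρ(x₀, ·)])^{q₀} dm₀`. Monotonicity of `t ↦ t^{q₀}` transports the inequality
for the inner functional `N_{q'}` to the integrand, and the elementary inequalities
`(a + b)^p ≤ a^p + b^p` and `w₁ a^p + w₂ b^p ≤ (w₁ a + w₂ b)^p` (for `0 ≤ p ≤ 1`, `w₁ + w₂ = 1`)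
finish the step after integrating. To split the integral of a sum, `x₀ ↦ N_{q'}[ρ₁(x₀, ·)]` must be
measurable, which follows from Tonelli's theorem applied factor by factor. -/

theorem ENNReal.arith_mean2_rpow_le_rpow_arith_mean2 {p : ℝ} (hp₀ : 0 ≤ p) (hp₁ : p ≤ 1)
    (w₁ w₂ a b : ℝ≥0∞) (hw : w₁ + w₂ = 1) :
    w₁ * a ^ p + w₂ * b ^ p ≤ (w₁ * a + w₂ * b) ^ p := by
  rcases hp₀.eq_or_lt with rfl | hp
  · simp [hw]
  have rpow_rpow_inv : ∀ x : ℝ≥0∞, (x ^ p) ^ p⁻¹ = x := fun x => by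
    rw [← ENNReal.rpow_mul, mul_inv_cancel₀ hp.ne', ENNReal.rpow_one]
  -- convexity of `t ↦ t ^ p⁻¹`, applied to `a ^ p` and `b ^ p`
  have h := ENNReal.rpow_arith_mean_le_arith_mean2_rpow w₁ w₂ (a ^ p) (b ^ p) hw
    (one_le_inv₀ hp |>.2 hp₁)
  rw [rpow_rpow_inv, rpow_rpow_inv] at h
  calc w₁ * a ^ p + w₂ * b ^ p = ((w₁ * a ^ p + w₂ * b ^ p) ^ p⁻¹) ^ p := by
        rw [← ENNReal.rpow_mul, inv_mul_cancel₀ hp.ne', ENNReal.rpow_one]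
    _ ≤ (w₁ * a + w₂ * b) ^ p := ENNReal.rpow_le_rpow h hp.le

theorem measurable_finCons {n : ℕ} {Ω : Fin (n + 1) → Type*} [∀ i, MeasurableSpace (Ω i)] :
    Measurable fun p : Ω 0 × (∀ i : Fin n, Ω i.succ) => (Fin.cons p.1 p.2 : ∀ i, Ω i) :=
  measurable_pi_iff.2 fun i =>
    Fin.cases measurable_fst (fun j => (measurable_pi_apply j).comp measurable_snd) i

theorem NQe_succ {n : ℕ} {Ω : Fin (n + 1) → Type} [inst : ∀ i, MeasurableSpace (Ω i)]
    (m : ∀ i, Measure (Ω i)) (q : Fin (n + 1) → ℝ) (ρ : (∀ i, Ω i) → ℝ≥0∞) :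
    NQe (n + 1) Ω inst m q ρ =
      ∫⁻ x₀, NQe n (fun i => Ω i.succ) (fun i => inst i.succ) (fun i => m i.succ)
        (fun i => q i.succ) (fun xs => ρ (Fin.cons x₀ xs)) ^ q 0 ∂m 0 :=
  rfl

section NQe

variable {N : ℕ} {Ω : Fin N → Type} [inst : ∀ i, MeasurableSpace (Ω i)] {m : ∀ i, Measure (Ω i)}
  {q : Fin N → ℝ}

theorem measurable_NQe [∀ i, SFinite (m i)] {α : Type*} [MeasurableSpace α]
    {g : α → (∀ i, Ω i) → ℝ≥0∞} (hg : Measurable (Function.uncurry g)) :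
    Measurable fun a => NQe N Ω inst m q (g a) := by
  induction N generalizing α with
  | zero => exact hg.comp (measurable_id.prodMk measurable_const)
  | succ n ih =>
    simp only [NQe_succ]
    refine Measurable.lintegral_prod_right' (ν := m 0) (f := fun p : α × Ω 0 =>
      NQe n _ _ (fun i => m i.succ) _ (fun xs => g p.1 (Fin.cons p.2 xs)) ^ q 0) (.pow_const ?_ _)
    have hcons : Measurable fun r : (α × Ω 0) × (∀ i : Fin n, Ω i.succ) =>
        ((r.1.1, Fin.cons r.1.2 r.2) : α × ∀ i, Ω i) :=
      (measurable_fst.comp measurable_fst).prodMk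
        (measurable_finCons.comp ((measurable_snd.comp measurable_fst).prodMk measurable_snd))
    exact ih (m := fun i => m i.succ) (g := fun (p : α × Ω 0) xs => g p.1 (Fin.cons p.2 xs))
      (hg.comp hcons)

theorem NQe_add_le [∀ i, SFinite (m i)] (hq : ∀ k, q k ∈ Set.Icc 0 1)
    {ρ₁ : (∀ i, Ω i) → ℝ≥0∞} (hρ₁ : Measurable ρ₁) (ρ₂ : (∀ i, Ω i) → ℝ≥0∞) :
    NQe N Ω inst m q (fun x => ρ₁ x + ρ₂ x) ≤ NQe N Ω inst m q ρ₁ + NQe N Ω inst m q ρ₂ := by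
  induction N with
  | zero => exact le_rfl
  | succ n ih =>
    obtain ⟨hq₀, hq₁⟩ := hq 0
    have hslice : Measurable fun x₀ : Ω 0 => NQe n (fun i => Ω i.succ) (fun i => inst i.succ)
        (fun i => m i.succ) (fun i => q i.succ) (fun xs => ρ₁ (Fin.cons x₀ xs)) :=
      measurable_NQe (g := fun x₀ xs => ρ₁ (Fin.cons x₀ xs)) (hρ₁.comp measurable_finCons)
    simp only [NQe_succ]
    rw [← lintegral_add_left (hslice.pow_const _)]
    refine lintegral_mono fun x₀ => ?_
    calc _ ≤ (_ + _) ^ q 0 := ENNReal.rpow_le_rpow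
            (ih (m := fun i => m i.succ) (fun k => hq k.succ)
              (hρ₁.comp (measurable_finCons.comp measurable_prodMk_left)) _) hq₀
      _ ≤ _ := ENNReal.rpow_add_le_add_rpow _ _ hq₀ hq₁

theorem NQe_concave (hq : ∀ k, q k ∈ Set.Icc 0 1) (w₁ w₂ : ℝ≥0∞) (hw : w₁ + w₂ = 1)
    (ρ₁ ρ₂ : (∀ i, Ω i) → ℝ≥0∞) :
    w₁ * NQe N Ω inst m q ρ₁ + w₂ * NQe N Ω inst m q ρ₂ ≤
      NQe N Ω inst m q (fun x => w₁ * ρ₁ x + w₂ * ρ₂ x) := by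
  induction N with
  | zero => exact le_rfl
  | succ n ih =>
    obtain ⟨hq₀, hq₁⟩ := hq 0
    simp only [NQe_succ]
    calc _ ≤ (∫⁻ x₀, w₁ * _ ∂m 0) + ∫⁻ x₀, w₂ * _ ∂m 0 :=
          add_le_add (lintegral_const_mul_le _ _) (lintegral_const_mul_le _ _)
      _ ≤ _ := le_lintegral_add _ _
      _ ≤ _ := lintegral_mono fun x₀ =>
          (ENNReal.arith_mean2_rpow_le_rpow_arith_mean2 hq₀ hq₁ _ _ _ _ hw).trans
            (ENNReal.rpow_le_rpow (ih (m := fun i => m i.succ) (fun k => hq k.succ) _ _) hq₀)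

end NQe

theorem stmt18_general (N : ℕ) (Ω : Fin N → Type) [inst : ∀ i, MeasurableSpace (Ω i)]
    (m : ∀ i, Measure (Ω i)) [∀ i, SigmaFinite (m i)]
    (q : Fin N → ℝ) (hq : ∀ k, 0 < q k ∧ q k ≤ 1)
    (ρ₁ ρ₂ : (∀ i, Ω i) → ℝ≥0∞) (hρ₁ : Measurable ρ₁) :
    NQe N Ω (fun i => inferInstance) m q (fun x => ρ₁ x + ρ₂ x) ≤
        NQe N Ω (fun i => inferInstance) m q ρ₁ +
          NQe N Ω (fun i => inferInstance) m q ρ₂ ∧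
    ∀ α : ℝ≥0∞, α ≤ 1 →
      α * NQe N Ω (fun i => inferInstance) m q ρ₁ +
          (1 - α) * NQe N Ω (fun i => inferInstance) m q ρ₂ ≤
        NQe N Ω (fun i => inferInstance) m q
          (fun x => α * ρ₁ x + (1 - α) * ρ₂ x) := by
  have hq' : ∀ k, q k ∈ Set.Icc 0 1 := fun k => ⟨(hq k).1.le, (hq k).2⟩
  exact ⟨NQe_add_le hq' hρ₁ ρ₂, fun α hα =>
    NQe_concave hq' α (1 - α) (add_tsub_cancel_of_le hα) ρ₁ ρ₂⟩

/-- For exponents `q ∈ (0,1]ᴺ`, the functional `N_q` is subadditive and concave on the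
cone of nonnegative measurable functions on the product measure space. -/
theorem stmt18 (N : ℕ) (Ω : Fin N → Type) [inst : ∀ i, MeasurableSpace (Ω i)]
    (m : ∀ i, Measure (Ω i)) [∀ i, SigmaFinite (m i)]
    (q : Fin N → ℝ) (hq : ∀ k, 0 < q k ∧ q k ≤ 1)
    (ρ₁ ρ₂ : (∀ i, Ω i) → ℝ≥0∞) (hρ₁ : Measurable ρ₁) (hρ₂ : Measurable ρ₂) :
    NQe N Ω (fun i => inferInstance) m q (fun x => ρ₁ x + ρ₂ x) ≤
        NQe N Ω (fun i => inferInstance) m q ρ₁ +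
          NQe N Ω (fun i => inferInstance) m q ρ₂ ∧
    ∀ α : ℝ≥0∞, α ≤ 1 →
      α * NQe N Ω (fun i => inferInstance) m q ρ₁ +
          (1 - α) * NQe N Ω (fun i => inferInstance) m q ρ₂ ≤
        NQe N Ω (fun i => inferInstance) m q
          (fun x => α * ρ₁ x + (1 - α) * ρ₂ x) :=
  stmt18_general N Ω (inst := inst) m q hq ρ₁ ρ₂ hρ₁
end
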